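/- arXiv:1603.07361 — 4 statements merged into one kernel-verified Lean document; each statement's English description precedes it below -/
import Mathlib

section
/- Let B > 0, let 0 ≤ γ₂ < π/2 and set ψ₂ = π/2 − γ₂. Let (U, ψ) be a solution of the capillary ODE system with parameter B on [0, 1] such that U(0) = 0, U(ξ) > 0 for 0 < ξ ≤ 1, 0 < ψ(0), and ψ(1) = ψ₂. Then for every ξ with 0 < ξ < 1 one has U(ξ)² = (2/B)(cos ψ₀ − cos ψ(ξ)) where ψ₀ = ψ(0), and 0 < U(ξ) < √((2/B)(cos ψ₀ − sin γ₂)). (Equations (12) and (13) of the paper, for the symmetric solution between the midpoint and the plate Π₂.) -/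
open Real Set

/-- A solution of the (normalized) capillary ODE system with parameter `B` on a set `I ⊆ ℝ`. -/
def IsCapillarySol (B : ℝ) (I : Set ℝ) (U ψ : ℝ → ℝ) : Prop :=
  ∀ ξ ∈ I, ψ ξ ∈ Set.Ioo (-(π / 2)) (π / 2) ∧
    HasDerivAt (fun t => Real.sin (ψ t)) (B * U ξ) ξ ∧
    HasDerivAt U (Real.tan (ψ ξ)) ξ

/-!
Along a solution the energy `cos ψ + (B/2) U²` is conserved, which gives the formula for `U²`
when `U(0) = 0`. Since `(sin ∘ ψ)' = B U > 0` on `(0, 1)`, the angle `ψ` increases strictly from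
`ψ(0) > 0` to `ψ(1) = π/2 − γ₂`, so `cos ψ(ξ) > cos (π/2 − γ₂) = sin γ₂` for `0 < ξ < 1`, which
is the height bound.
-/

theorem hasDerivAt_sqrt_one_sub_sq {f : ℝ → ℝ} {f' x : ℝ} (hf : HasDerivAt f f' x)
    (hx : f x ^ 2 < 1) :
    HasDerivAt (fun t => √(1 - f t ^ 2)) (-(f x * f') / √(1 - f x ^ 2)) x := by
  have hne : 1 - f x ^ 2 ≠ 0 := by linarith
  refine (((hf.fun_pow 2).const_sub 1).sqrt hne).congr_deriv ?_
  field_simp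
  ring

/-- Only `sin ∘ ψ` is known to be differentiable, so `cos ψ` enters the energy as
`√(1 - sin² ψ)`. -/
noncomputable def capillaryEnergy (B : ℝ) (U ψ : ℝ → ℝ) (t : ℝ) : ℝ :=
  √(1 - sin (ψ t) ^ 2) + B / 2 * U t ^ 2

theorem sqrt_one_sub_sin_sq_of_mem_Ioo {x : ℝ} (hx : x ∈ Ioo (-(π / 2)) (π / 2)) :
    √(1 - sin x ^ 2) = cos x :=
  (cos_eq_sqrt_one_sub_sin_sq hx.1.le hx.2.le).symm

namespace IsCapillarySol

variable {B : ℝ} {I : Set ℝ} {U ψ : ℝ → ℝ}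

theorem capillaryEnergy_eq (h : IsCapillarySol B I U ψ) {t : ℝ} (ht : t ∈ I) :
    capillaryEnergy B U ψ t = cos (ψ t) + B / 2 * U t ^ 2 := by
  rw [capillaryEnergy, sqrt_one_sub_sin_sq_of_mem_Ioo (h t ht).1]

theorem hasDerivAt_capillaryEnergy (h : IsCapillarySol B I U ψ) {t : ℝ} (ht : t ∈ I) :
    HasDerivAt (capillaryEnergy B U ψ) 0 t := by
  obtain ⟨hψ, hsin, hU⟩ := h t ht
  have hcos : 0 < cos (ψ t) := cos_pos_of_mem_Ioo hψ
  have hsin_sq : sin (ψ t) ^ 2 < 1 := by nlinarith [sin_sq_add_cos_sq (ψ t)]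
  refine ((hasDerivAt_sqrt_one_sub_sq hsin hsin_sq).add
    ((hU.fun_pow 2).const_mul (B / 2))).congr_deriv ?_
  rw [sqrt_one_sub_sin_sq_of_mem_Ioo hψ, tan_eq_sin_div_cos]
  field_simp
  ring

theorem capillaryEnergy_eq_left {a b : ℝ} (h : IsCapillarySol B (Icc a b) U ψ) {t : ℝ}
    (ht : t ∈ Icc a b) : capillaryEnergy B U ψ t = capillaryEnergy B U ψ a :=
  constant_of_has_deriv_right_zero
    (fun _ hs => (h.hasDerivAt_capillaryEnergy hs).continuousAt.continuousWithinAt)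
    (fun _ hs => (h.hasDerivAt_capillaryEnergy (Ico_subset_Icc_self hs)).hasDerivWithinAt) t ht

theorem sq_eq_of_eq_zero {a b : ℝ} (hB : 0 < B) (h : IsCapillarySol B (Icc a b) U ψ)
    (hUa : U a = 0) {t : ℝ} (ht : t ∈ Icc a b) :
    U t ^ 2 = 2 / B * (cos (ψ a) - cos (ψ t)) := by
  have hconserved := h.capillaryEnergy_eq_left ht
  rw [h.capillaryEnergy_eq ht, h.capillaryEnergy_eq (left_mem_Icc.2 (ht.1.trans ht.2)), hUa]
    at hconserved
  field_simp
  linarith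

theorem strictMonoOn {a b : ℝ} (hB : 0 < B) (h : IsCapillarySol B (Icc a b) U ψ)
    (hU : ∀ t ∈ Ioo a b, 0 < U t) : StrictMonoOn ψ (Icc a b) := by
  have hsin : StrictMonoOn (fun t => sin (ψ t)) (Icc a b) := by
    refine strictMonoOn_of_deriv_pos (convex_Icc a b)
      (fun t ht => (h t ht).2.1.continuousAt.continuousWithinAt) fun t ht => ?_
    rw [interior_Icc] at ht
    rw [(h t (Ioo_subset_Icc_self ht)).2.1.deriv]
    exact mul_pos hB (hU t ht)
  have hmaps : MapsTo ψ (Icc a b) (Icc (-(π / 2)) (π / 2)) :=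
    fun t ht => Ioo_subset_Icc_self (h t ht).1
  intro s hs t ht hst
  exact (strictMonoOn_sin.lt_iff_lt (hmaps hs) (hmaps ht)).1 (hsin hs ht hst)

end IsCapillarySol

theorem capillary_symmetric_height_bound_general
    (B : ℝ) (hB : 0 < B) (γ₂ : ℝ)
    (U ψ : ℝ → ℝ) (h : IsCapillarySol B (Set.Icc 0 1) U ψ)
    (hU0 : U 0 = 0) (hUpos : ∀ ξ : ℝ, 0 < ξ → ξ ≤ 1 → 0 < U ξ)
    (hψ0 : 0 < ψ 0) (hψ1 : ψ 1 = π / 2 - γ₂) :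
    ∀ ξ : ℝ, 0 < ξ → ξ < 1 →
      U ξ ^ 2 = 2 / B * (Real.cos (ψ 0) - Real.cos (ψ ξ)) ∧
      0 < U ξ ∧
      U ξ < Real.sqrt (2 / B * (Real.cos (ψ 0) - Real.sin γ₂)) := by
  intro ξ hξ0 hξ1
  have hξ : ξ ∈ Icc (0 : ℝ) 1 := ⟨hξ0.le, hξ1.le⟩
  have hU_sq := h.sq_eq_of_eq_zero hB hU0 hξ
  have hUξ : 0 < U ξ := hUpos ξ hξ0 hξ1.le
  have hψ_mono := h.strictMonoOn hB fun t ht => hUpos t ht.1 ht.2.le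
  have hψξ : 0 < ψ ξ := hψ0.trans (hψ_mono (left_mem_Icc.2 zero_le_one) hξ hξ0)
  have hψξ1 : ψ ξ < ψ 1 := hψ_mono hξ (right_mem_Icc.2 zero_le_one) hξ1
  have hψ1_le : ψ 1 ≤ π :=
    (h 1 (right_mem_Icc.2 zero_le_one)).1.2.le.trans (by linarith [pi_pos])
  have hcos : sin γ₂ < cos (ψ ξ) := by
    rw [← cos_pi_div_two_sub, ← hψ1]
    exact strictAntiOn_cos ⟨hψξ.le, hψξ1.le.trans hψ1_le⟩ ⟨(hψξ.trans hψξ1).le, hψ1_le⟩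
      hψξ1
  refine ⟨hU_sq, hUξ, (lt_sqrt hUξ.le).2 ?_⟩
  rw [hU_sq]
  gcongr

/-- Equations (12)–(13) for the symmetric solution between the midpoint (ξ = 0, where the
profile crosses the axis) and the plate Π₂ (ξ = 1, met in inclination ψ₂ = π/2 − γ₂). -/
theorem capillary_symmetric_height_bound
    (B : ℝ) (hB : 0 < B) (γ₂ : ℝ) (hγ₂ : 0 ≤ γ₂) (hγ₂' : γ₂ < π / 2)
    (U ψ : ℝ → ℝ) (h : IsCapillarySol B (Set.Icc 0 1) U ψ)
    (hU0 : U 0 = 0) (hUpos : ∀ ξ : ℝ, 0 < ξ → ξ ≤ 1 → 0 < U ξ)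
    (hψ0 : 0 < ψ 0) (hψ1 : ψ 1 = π / 2 - γ₂) :
    ∀ ξ : ℝ, 0 < ξ → ξ < 1 →
      U ξ ^ 2 = 2 / B * (Real.cos (ψ 0) - Real.cos (ψ ξ)) ∧
      0 < U ξ ∧
      U ξ < Real.sqrt (2 / B * (Real.cos (ψ 0) - Real.sin γ₂)) :=
  capillary_symmetric_height_bound_general B hB γ₂ U ψ h hU0 hUpos hψ0 hψ1
end

section
/- Fix ψ₂ with 0 < ψ₂ ≤ π/2. Then the function 𝒥(ψ₁; ψ₂) = ∫_{ψ₁}^{ψ₂} cos ψ/√(cos ψ₁ − cos ψ) dψ is strictly decreasing as a function of ψ₁ on the interval (0, ψ₂). (The monotonicity assertion of Appendix 5 of the paper, proved via the substitution s = −cos ψ and differentiation of (48).) -/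
/-!
With `c = cos ψ₁`, `c₂ = cos ψ₂` and the substitution `cos ψ = w := c + (c₂ - c) u`, the integral
becomes `∫₀¹ √(c - c₂) · w / √(1 - w²) · u^(-1/2) du`, whose singularity sits at the fixed endpoint
`u = 0`. For fixed `u`, both `√(c - c₂)` and `w` increase strictly with `c`, and so does
`w / √(1 - w²)` (that is, `cot (arccos w)`) as long as `w ≥ 0`, which is where `ψ₂ ≤ π / 2` enters.
Since `cos ψ₁` decreases in `ψ₁`, so does the integral.
-/

open Real MeasureTheory Set

lemma strictMonoOn_div_sqrt_one_sub_sq :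
    StrictMonoOn (fun w : ℝ => w / √(1 - w ^ 2)) (Ico 0 1) := by
  intro a ⟨ha₀, _⟩ b ⟨_, hb₁⟩ hab
  have hb : 0 < √(1 - b ^ 2) := sqrt_pos.2 (by nlinarith)
  calc a / √(1 - a ^ 2) ≤ a / √(1 - b ^ 2) :=
        div_le_div_of_nonneg_left ha₀ hb (sqrt_le_sqrt (by nlinarith))
    _ < b / √(1 - b ^ 2) := div_lt_div_of_pos_right hab hb

lemma add_sub_mul_mem_Icc {c₂ c u : ℝ} (hc : c₂ ≤ c) (hu : u ∈ Icc (0 : ℝ) 1) :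
    c + (c₂ - c) * u ∈ Icc c₂ c := by
  constructor <;> nlinarith [hu.1, hu.2]

lemma add_sub_mul_mem_Ioo {c₂ c u : ℝ} (hc : c₂ < c) (hu : u ∈ Ioo (0 : ℝ) 1) :
    c + (c₂ - c) * u ∈ Ioo c₂ c := by
  constructor <;> nlinarith [hu.1, hu.2]

lemma integral_lt_integral_of_lt_on_Ioo {f g : ℝ → ℝ} {a b : ℝ} (hab : a < b)
    (hf : IntervalIntegrable f volume a b) (hg : IntervalIntegrable g volume a b)
    (hlt : ∀ x ∈ Ioo a b, f x < g x) : ∫ x in a..b, f x < ∫ x in a..b, g x := by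
  rw [← sub_pos, ← intervalIntegral.integral_sub hg hf]
  exact intervalIntegral.intervalIntegral_pos_of_pos_on (hg.sub hf)
    (fun x hx => sub_pos.2 (hlt x hx)) hab

noncomputable def substAngle (c₂ c u : ℝ) : ℝ := arccos (c + (c₂ - c) * u)

noncomputable def substIntegrand (c₂ c u : ℝ) : ℝ :=
  √(c - c₂) * ((c + (c₂ - c) * u) / √(1 - (c + (c₂ - c) * u) ^ 2)) / √u

section Substitution

variable {c₂ c : ℝ}

lemma strictMonoOn_substAngle (h₂ : -1 ≤ c₂) (hc : c₂ < c) (h₁ : c ≤ 1) :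
    StrictMonoOn (substAngle c₂ c) (Icc 0 1) := by
  intro u hu v hv huv
  obtain ⟨hu₂, hu₁⟩ := add_sub_mul_mem_Icc hc.le hu
  obtain ⟨hv₂, hv₁⟩ := add_sub_mul_mem_Icc hc.le hv
  exact strictAntiOn_arccos ⟨by linarith, by linarith⟩ ⟨by linarith, by linarith⟩ (by nlinarith)

lemma image_substAngle (h₂ : -1 ≤ c₂) (hc : c₂ < c) (h₁ : c ≤ 1) :
    substAngle c₂ c '' Ioo 0 1 = Ioo (arccos c) (arccos c₂) := by
  have hcont : Continuous (substAngle c₂ c) := by unfold substAngle; fun_prop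
  rw [hcont.continuousOn.image_Ioo_of_strictMonoOn zero_le_one
    (strictMonoOn_substAngle h₂ hc h₁)]
  simp [substAngle]

lemma hasDerivAt_substAngle (h₂ : -1 ≤ c₂) (hc : c₂ < c) (h₁ : c ≤ 1) {u : ℝ}
    (hu : u ∈ Ioo (0 : ℝ) 1) :
    HasDerivAt (substAngle c₂ c) ((c - c₂) / √(1 - (c + (c₂ - c) * u) ^ 2)) u := by
  obtain ⟨hw₂, hw₁⟩ := add_sub_mul_mem_Ioo hc hu
  have hline : HasDerivAt (fun u : ℝ => c + (c₂ - c) * u) (c₂ - c) u := by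
    simpa using ((hasDerivAt_id u).const_mul (c₂ - c)).const_add c
  exact ((hasDerivAt_arccos (by linarith) (by linarith)).comp u hline).congr_deriv (by ring)

lemma abs_deriv_smul_integrand_substAngle (h₂ : -1 ≤ c₂) (hc : c₂ < c) (h₁ : c ≤ 1) {u : ℝ}
    (hu : u ∈ Ioo (0 : ℝ) 1) :
    |(c - c₂) / √(1 - (c + (c₂ - c) * u) ^ 2)| •
        (cos (substAngle c₂ c u) / √(c - cos (substAngle c₂ c u))) =
      substIntegrand c₂ c u := by
  obtain ⟨hw₂, hw₁⟩ := add_sub_mul_mem_Ioo hc hu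
  have hcos : cos (substAngle c₂ c u) = c + (c₂ - c) * u :=
    cos_arccos (by linarith) (by linarith)
  have hsqrt : √(c - (c + (c₂ - c) * u)) = √(c - c₂) * √u := by
    rw [← sqrt_mul (by linarith)]
    congr 1
    ring
  have hA : 0 < √(c - c₂) := sqrt_pos.2 (sub_pos.2 hc)
  have hu' : 0 < √u := sqrt_pos.2 hu.1
  have hS : 0 < √(1 - (c + (c₂ - c) * u) ^ 2) := sqrt_pos.2 (by nlinarith)
  rw [hcos, hsqrt, abs_of_pos (div_pos (sub_pos.2 hc) hS), substIntegrand, smul_eq_mul]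
  field_simp
  rw [sq_sqrt (sub_pos.2 hc).le]
  ring

theorem integral_arccos_eq_integral_substIntegrand (h₂ : -1 ≤ c₂) (hc : c₂ < c) (h₁ : c ≤ 1) :
    ∫ ψ in arccos c..arccos c₂, cos ψ / √(c - cos ψ) =
      ∫ u in (0 : ℝ)..1, substIntegrand c₂ c u := by
  rw [intervalIntegral.integral_of_le (arccos_le_arccos hc.le), integral_Ioc_eq_integral_Ioo,
    ← image_substAngle h₂ hc h₁,
    integral_image_eq_integral_abs_deriv_smul measurableSet_Ioo
      (fun u hu => (hasDerivAt_substAngle h₂ hc h₁ hu).hasDerivWithinAt)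
      (strictMonoOn_substAngle h₂ hc h₁ |>.mono Ioo_subset_Icc_self).injOn,
    intervalIntegral.integral_of_le zero_le_one, integral_Ioc_eq_integral_Ioo]
  exact setIntegral_congr_fun measurableSet_Ioo
    fun u hu => abs_deriv_smul_integrand_substAngle h₂ hc h₁ hu

theorem integral_eq_integral_substIntegrand {x y : ℝ} (hx : 0 ≤ x) (hxy : x < y) (hy : y ≤ π) :
    ∫ ψ in x..y, cos ψ / √(cos x - cos ψ) =
      ∫ u in (0 : ℝ)..1, substIntegrand (cos y) (cos x) u := by
  have := integral_arccos_eq_integral_substIntegrand (neg_one_le_cos y)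
    (cos_lt_cos_of_nonneg_of_le_pi hx hy hxy) (cos_le_one x)
  rwa [arccos_cos hx (by linarith), arccos_cos (by linarith) hy] at this

end Substitution

section Monotonicity

variable {c₂ c : ℝ}

lemma substIntegrand_lt_substIntegrand {c' u : ℝ} (h₂ : 0 ≤ c₂) (hc' : c₂ < c') (hc : c' < c)
    (h₁ : c < 1) (hu : u ∈ Ioo (0 : ℝ) 1) : substIntegrand c₂ c' u < substIntegrand c₂ c u := by
  obtain ⟨hw₂', -⟩ := add_sub_mul_mem_Ioo hc' hu
  obtain ⟨-, hw₁⟩ := add_sub_mul_mem_Ioo (hc'.trans hc) hu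
  have hww : c' + (c₂ - c') * u < c + (c₂ - c) * u := by nlinarith [hu.2]
  have hcot := strictMonoOn_div_sqrt_one_sub_sq ⟨by linarith, by linarith⟩
    ⟨by linarith, by linarith⟩ hww
  exact div_lt_div_of_pos_right
    (mul_lt_mul'' (sqrt_lt_sqrt (by linarith) (by linarith)) hcot
      (sqrt_nonneg _) (div_nonneg (by linarith) (sqrt_nonneg _)))
    (sqrt_pos.2 hu.1)

lemma intervalIntegrable_substIntegrand (h₂ : 0 ≤ c₂) (hc : c₂ < c) (h₁ : c < 1) :
    IntervalIntegrable (substIntegrand c₂ c) volume 0 1 := by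
  rw [intervalIntegrable_iff_integrableOn_Ioo_of_le zero_le_one]
  have hdom := ((intervalIntegral.integrableOn_Ioo_rpow_iff one_pos).2
    (by norm_num : (-1 : ℝ) < -(1 / 2))).const_mul (√(c - c₂) * (c / √(1 - c ^ 2)))
  refine hdom.mono' (Measurable.aestronglyMeasurable (by unfold substIntegrand; fun_prop)) ?_
  filter_upwards [ae_restrict_mem measurableSet_Ioo] with u hu
  obtain ⟨hw₂, hw₁⟩ := add_sub_mul_mem_Ioo hc hu
  -- `w / √(1 - w²)` is bounded by its value at `w = c`, leaving only the factor `u ^ (-1/2)`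
  have hcot : (c + (c₂ - c) * u) / √(1 - (c + (c₂ - c) * u) ^ 2) ≤ c / √(1 - c ^ 2) :=
    strictMonoOn_div_sqrt_one_sub_sq.monotoneOn ⟨by linarith, by linarith⟩ ⟨by linarith, h₁⟩
      hw₁.le
  have hnonneg : 0 ≤ substIntegrand c₂ c u :=
    div_nonneg (mul_nonneg (sqrt_nonneg _) (div_nonneg (by linarith) (sqrt_nonneg _)))
      (sqrt_nonneg _)
  rw [norm_of_nonneg hnonneg, substIntegrand, rpow_neg hu.1.le, ← sqrt_eq_rpow,
    ← div_eq_mul_inv]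
  exact div_le_div_of_nonneg_right (mul_le_mul_of_nonneg_left hcot (sqrt_nonneg _))
    (sqrt_nonneg _)

end Monotonicity

theorem J_strictAntiOn_general (ψ₂ : ℝ) (h₂' : ψ₂ ≤ π / 2) :
    StrictAntiOn
      (fun ψ₁ => ∫ ψ in ψ₁..ψ₂, Real.cos ψ / Real.sqrt (Real.cos ψ₁ - Real.cos ψ))
      (Set.Ioo 0 ψ₂) := by
  intro a ⟨ha₀, ha⟩ b ⟨hb₀, hb⟩ hab
  have hψ₂ : ψ₂ ≤ π := by linarith [pi_pos]
  have h₂ : 0 ≤ cos ψ₂ := cos_nonneg_of_mem_Icc ⟨by linarith [pi_pos], h₂'⟩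
  have hcb : cos ψ₂ < cos b := cos_lt_cos_of_nonneg_of_le_pi hb₀.le hψ₂ hb
  have hcab : cos b < cos a := cos_lt_cos_of_nonneg_of_le_pi ha₀.le (by linarith) hab
  have hca : cos a < 1 := by simpa using cos_lt_cos_of_nonneg_of_le_pi le_rfl (by linarith) ha₀
  simp only [integral_eq_integral_substIntegrand ha₀.le ha hψ₂,
    integral_eq_integral_substIntegrand hb₀.le hb hψ₂]
  exact integral_lt_integral_of_lt_on_Ioo zero_lt_one
    (intervalIntegrable_substIntegrand h₂ hcb (hcab.trans hca))
    (intervalIntegrable_substIntegrand h₂ (hcb.trans hcab) hca)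
    fun u hu => substIntegrand_lt_substIntegrand h₂ hcb hcab hca hu

/-- Appendix 5: for fixed ψ₂ ∈ (0, π/2], the function
`𝒥(ψ₁; ψ₂) = ∫_{ψ₁}^{ψ₂} cos ψ/√(cos ψ₁ − cos ψ) dψ` is strictly decreasing in ψ₁ on (0, ψ₂). -/
theorem J_strictAntiOn (ψ₂ : ℝ) (h₂ : 0 < ψ₂) (h₂' : ψ₂ ≤ π / 2) :
    StrictAntiOn
      (fun ψ₁ => ∫ ψ in ψ₁..ψ₂, Real.cos ψ / Real.sqrt (Real.cos ψ₁ - Real.cos ψ))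
      (Set.Ioo 0 ψ₂) :=
  J_strictAntiOn_general ψ₂ h₂'
end

section
/- Let B > 0, 0 < γ₂ < π/2, and let (U, ψ) be a solution of the capillary ODE system with parameter B on an interval I. Suppose ξ₀, ξ₂ ∈ I with ψ(ξ₀) = 0, U(ξ₀) = U₀, ψ(ξ₂) = π/2 − γ₂, and U(ξ₂) = U₂. Then B·U₀² = B·U₂² − 2(1 − sin γ₂). In particular the normalized attracting force 𝓕 = B·U₀² between the plates satisfies 𝓕 = B·U₂² − 2(1 − sin γ₂). (Force formula (29a) of the paper, obtained from the first integral B·U² + 2 cos ψ = C.) -/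
open Real Set

theorem Convex.is_const_of_hasDerivWithinAt_zero {E : Type*} [NormedAddCommGroup E]
    [NormedSpace ℝ E] {s : Set ℝ} {f : ℝ → E} (hs : Convex ℝ s)
    (hf : ∀ x ∈ s, HasDerivWithinAt f 0 s x) {x y : ℝ} (hx : x ∈ s) (hy : y ∈ s) :
    f x = f y := by
  have := hs.norm_image_sub_le_of_norm_hasDerivWithin_le (C := 0) hf (fun _ _ => by simp) hx hy
  rw [zero_mul, norm_le_zero_iff, sub_eq_zero] at this
  exact this.symm

theorem HasDerivWithinAt.cos_of_sin {f : ℝ → ℝ} {s : Set ℝ} {x d : ℝ}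
    (hf : ∀ t ∈ s, f t ∈ Ioo (-(π / 2)) (π / 2))
    (hsin : HasDerivWithinAt (fun t => Real.sin (f t)) d s x) (hx : x ∈ s) :
    HasDerivWithinAt (fun t => Real.cos (f t)) (-Real.tan (f x) * d) s x := by
  have hcos_eq : ∀ t ∈ s, Real.cos (f t) = √(1 - Real.sin (f t) ^ 2) := fun t ht =>
    cos_eq_sqrt_one_sub_sin_sq (hf t ht).1.le (hf t ht).2.le
  have hcos_pos : 0 < Real.cos (f x) := cos_pos_of_mem_Ioo (hf x hx)
  have hsq : 1 - Real.sin (f x) ^ 2 = Real.cos (f x) ^ 2 := by rw [← cos_sq']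
  have hsqrt := ((hsin.fun_pow 2).const_sub 1).sqrt (by rw [hsq]; positivity)
  refine (hsqrt.congr hcos_eq (hcos_eq x hx)).congr_deriv ?_
  rw [hsq, sqrt_sq hcos_pos.le, tan_eq_sin_div_cos]
  field_simp
  ring

noncomputable def capillaryFirstIntegral (B : ℝ) (U ψ : ℝ → ℝ) (ξ : ℝ) : ℝ :=
  B * U ξ ^ 2 + 2 * cos (ψ ξ)

namespace IsCapillarySol

variable {B : ℝ} {I : Set ℝ} {U ψ : ℝ → ℝ}

theorem hasDerivWithinAt_firstIntegral (h : IsCapillarySol B I U ψ) {ξ : ℝ} (hξ : ξ ∈ I) :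
    HasDerivWithinAt (capillaryFirstIntegral B U ψ) 0 I ξ := by
  obtain ⟨-, hsin, hU⟩ := h ξ hξ
  have hcos := hsin.hasDerivWithinAt.cos_of_sin (fun t ht => (h t ht).1) hξ
  refine ((hU.hasDerivWithinAt.fun_pow 2).const_mul B |>.add (hcos.const_mul 2)).congr_deriv ?_
  push_cast
  ring

theorem firstIntegral_eq (h : IsCapillarySol B I U ψ) (hI : I.OrdConnected) {ξ η : ℝ}
    (hξ : ξ ∈ I) (hη : η ∈ I) :
    capillaryFirstIntegral B U ψ ξ = capillaryFirstIntegral B U ψ η :=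
  hI.convex.is_const_of_hasDerivWithinAt_zero (fun _ => h.hasDerivWithinAt_firstIntegral) hξ hη

end IsCapillarySol

theorem capillary_force_formula_29a_general
    (B : ℝ) (γ₂ : ℝ)
    (I : Set ℝ) (hI : I.OrdConnected)
    (U ψ : ℝ → ℝ) (h : IsCapillarySol B I U ψ)
    (ξ₀ ξ₂ : ℝ) (hξ₀ : ξ₀ ∈ I) (hξ₂ : ξ₂ ∈ I)
    (hψ₀ : ψ ξ₀ = 0) (hψ₂ : ψ ξ₂ = π / 2 - γ₂)
    (U₀ U₂ : ℝ) (hU₀ : U ξ₀ = U₀) (hU₂ : U ξ₂ = U₂) :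
    B * U₀ ^ 2 = B * U₂ ^ 2 - 2 * (1 - Real.sin γ₂) := by
  have hconst := h.firstIntegral_eq hI hξ₀ hξ₂
  rw [capillaryFirstIntegral, capillaryFirstIntegral, hU₀, hU₂, hψ₀, hψ₂, cos_zero,
    cos_pi_div_two_sub] at hconst
  linarith

/-- Force formula (29a): from the first integral `B U² + 2 cos ψ = C`, if ψ(ξ₀) = 0 and
ψ(ξ₂) = π/2 − γ₂, then `B U₀² = B U₂² − 2(1 − sin γ₂)`; i.e. the normalized attracting force
`𝓕 = B U₀²` satisfies `𝓕 = B U₂² − 2(1 − sin γ₂)`. -/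
theorem capillary_force_formula_29a
    (B : ℝ) (hB : 0 < B) (γ₂ : ℝ) (hγ₂ : 0 < γ₂) (hγ₂' : γ₂ < π / 2)
    (I : Set ℝ) (hI : I.OrdConnected)
    (U ψ : ℝ → ℝ) (h : IsCapillarySol B I U ψ)
    (ξ₀ ξ₂ : ℝ) (hξ₀ : ξ₀ ∈ I) (hξ₂ : ξ₂ ∈ I)
    (hψ₀ : ψ ξ₀ = 0) (hψ₂ : ψ ξ₂ = π / 2 - γ₂)
    (U₀ U₂ : ℝ) (hU₀ : U ξ₀ = U₀) (hU₂ : U ξ₂ = U₂) :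
    B * U₀ ^ 2 = B * U₂ ^ 2 - 2 * (1 - Real.sin γ₂) :=
  capillary_force_formula_29a_general B γ₂ I hI U ψ h ξ₀ ξ₂ hξ₀ hξ₂ hψ₀ hψ₂ U₀ U₂ hU₀ hU₂
end

section
/- Fix γ₂ with 0 ≤ γ₂ < π/2. For every L > 0 there exists a unique C > 1 such that ∫_{−π/2}^{π/2 − γ₂} cos ψ/√(C − cos ψ) dψ = L; that is, the map C ↦ ∫_{−π/2}^{π/2 − γ₂} cos ψ/√(C − cos ψ) dψ is a strictly decreasing bijection from (1, ∞) onto (0, ∞). In particular, for every B > 0 the relation 2 = (1/√(2B))·∫_{−π/2}^{π/2 − γ₂} cos ψ/√(C − cos ψ) dψ determines C uniquely, so the barrier solution 𝒯 (datum γ₁ = 0 on Π₁, γ₂ on Π₂) is uniquely determined by B. (The uniqueness assertion following equation (A5) in the Addenda.) -/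
/-!
On `(-π/2, π/2)` the integrand `cos ψ / √(C - cos ψ)` is positive and strictly decreasing in `C`,
so its integral `F(C)` over `[a, b]` is positive and strictly decreasing on `(1, ∞)`; it is
continuous there by parametric integration. Since `|F(C)| ≤ (b - a)/√(C - 1)`, `F(C) → 0` as
`C → ∞`. As `C → 1⁺`, the bound `1 - cos ψ ≤ ψ²/2` makes the integrand on `[0, m]`, `m < π/2`,
at least `cos m / (√(C - 1) + ψ)`, whose integral grows like `-log √(C - 1)`, so `F(C) → ∞`.
The intermediate value theorem then makes `F` a bijection onto `(0, ∞)`, and the relation with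
`B` is the case `L = 2√(2B)`.
-/

open Real Set Filter Topology intervalIntegral

noncomputable def barrierIntegral (a b C : ℝ) : ℝ :=
  ∫ ψ in a..b, cos ψ / √(C - cos ψ)

lemma Set.BijOn.existsUnique_mem_eq {α β : Type*} {f : α → β} {s : Set α} {t : Set β}
    (h : BijOn f s t) {y : β} (hy : y ∈ t) : ∃! x, x ∈ s ∧ f x = y := by
  obtain ⟨x, hx, rfl⟩ := h.surjOn hy
  exact ⟨x, ⟨hx, rfl⟩, fun x' hx' => h.injOn hx'.1 hx hx'.2⟩

lemma surjOn_Ioi_of_tendsto_nhdsGT_of_tendsto_atTop {δ : Type*} [LinearOrder δ]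
    [TopologicalSpace δ] [OrderTopology δ] {f : ℝ → δ} {a : ℝ} {l : δ}
    (hf : ContinuousOn f (Ioi a)) (hleft : Tendsto f (𝓝[>] a) atTop)
    (hright : Tendsto f atTop (𝓝 l)) : SurjOn f (Ioi a) (Ioi l) := by
  intro y (hy : l < y)
  obtain ⟨x₁, hfx₁, hx₁⟩ := ((hleft.eventually_ge_atTop y).and self_mem_nhdsWithin).exists
  obtain ⟨x₂, hfx₂, hx₁₂⟩ :=
    ((hright.eventually (gt_mem_nhds hy)).and (eventually_ge_atTop x₁)).exists
  obtain ⟨x, hx, rfl⟩ := intermediate_value_Icc' hx₁₂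
    (hf.mono fun x hx => (mem_Ioi.1 hx₁).trans_le hx.1) ⟨hfx₂.le, hfx₁⟩
  exact ⟨x, (mem_Ioi.1 hx₁).trans_le hx.1, rfl⟩

lemma sub_cos_pos {C : ℝ} (hC : 1 < C) (ψ : ℝ) : 0 < C - cos ψ := by
  linarith [cos_le_one ψ]

lemma continuous_cos_div_sqrt_sub_cos {C : ℝ} (hC : 1 < C) :
    Continuous fun ψ => cos ψ / √(C - cos ψ) :=
  continuous_cos.div (continuous_const.sub continuous_cos).sqrt
    fun ψ => (sqrt_pos.2 (sub_cos_pos hC ψ)).ne'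

lemma cos_div_sqrt_sub_cos_lt {ψ C₁ C₂ : ℝ} (hψ : 0 < cos ψ) (hC₁ : 1 < C₁) (h : C₁ < C₂) :
    cos ψ / √(C₂ - cos ψ) < cos ψ / √(C₁ - cos ψ) :=
  div_lt_div_of_pos_left hψ (sqrt_pos.2 (sub_cos_pos hC₁ ψ))
    (sqrt_lt_sqrt (sub_cos_pos hC₁ ψ).le (by linarith))

lemma sqrt_sub_cos_le {C : ℝ} (hC : 1 ≤ C) (ψ : ℝ) : √(C - cos ψ) ≤ √(C - 1) + |ψ| := by
  rw [sqrt_le_left (by positivity)]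
  have h1 := one_sub_sq_div_two_le_cos (x := ψ)
  have h2 := sq_sqrt (sub_nonneg.2 hC)
  nlinarith [sq_abs ψ, sqrt_nonneg (C - 1), abs_nonneg ψ]

lemma abs_barrierIntegral_le (a b : ℝ) {C : ℝ} (hC : 1 < C) :
    |barrierIntegral a b C| ≤ |b - a| / √(C - 1) := by
  refine (norm_integral_le_of_norm_le_const (f := fun ψ => cos ψ / √(C - cos ψ))
    (C := (√(C - 1))⁻¹) fun ψ _ => ?_).trans_eq (inv_mul_eq_div _ _)
  rw [norm_div, norm_of_nonneg (sqrt_nonneg _), ← one_div]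
  exact div_le_div₀ zero_le_one (abs_cos_le_one ψ) (sqrt_pos.2 (sub_pos.2 hC))
    (sqrt_le_sqrt (by linarith [cos_le_one ψ]))

lemma continuousOn_barrierIntegral (a b : ℝ) : ContinuousOn (barrierIntegral a b) (Ioi 1) := by
  rw [continuousOn_iff_continuous_domRestrict]
  exact continuous_parametric_intervalIntegral_of_continuous'
    (f := fun (C : Ioi (1 : ℝ)) ψ => cos ψ / √(C - cos ψ))
    ((continuous_cos.comp continuous_snd).div
      ((continuous_subtype_val.comp continuous_fst).sub (continuous_cos.comp continuous_snd)).sqrt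
      fun p => (sqrt_pos.2 (sub_cos_pos p.1.2 p.2)).ne') a b

lemma tendsto_barrierIntegral_atTop (a b : ℝ) :
    Tendsto (barrierIntegral a b) atTop (𝓝 0) := by
  refine squeeze_zero_norm'
    ((eventually_gt_atTop 1).mono fun C hC => abs_barrierIntegral_le a b hC)
    (tendsto_const_nhds.div_atTop ?_)
  exact tendsto_sqrt_atTop.comp (tendsto_atTop_add_const_right _ (-1) tendsto_id)

section

variable {a b : ℝ} (ha : -(π / 2) ≤ a) (hb : b ≤ π / 2)
include ha hb

lemma barrierIntegral_pos (hab : a < b) {C : ℝ} (hC : 1 < C) : 0 < barrierIntegral a b C :=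
  intervalIntegral_pos_of_pos_on ((continuous_cos_div_sqrt_sub_cos hC).intervalIntegrable a b)
    (fun ψ hψ => div_pos (cos_pos_of_mem_Ioo ⟨ha.trans_lt hψ.1, hψ.2.trans_le hb⟩)
      (sqrt_pos.2 (sub_cos_pos hC ψ))) hab

lemma strictAntiOn_barrierIntegral (hab : a < b) :
    StrictAntiOn (barrierIntegral a b) (Ioi 1) := by
  intro C₁ (hC₁ : 1 < C₁) C₂ (hC₂ : 1 < C₂) h
  rw [← sub_pos, barrierIntegral, barrierIntegral, ← integral_sub
    ((continuous_cos_div_sqrt_sub_cos hC₁).intervalIntegrable a b)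
    ((continuous_cos_div_sqrt_sub_cos hC₂).intervalIntegrable a b)]
  refine intervalIntegral_pos_of_pos_on (((continuous_cos_div_sqrt_sub_cos hC₁).sub
    (continuous_cos_div_sqrt_sub_cos hC₂)).intervalIntegrable a b) (fun ψ hψ => ?_) hab
  exact sub_pos.2 (cos_div_sqrt_sub_cos_lt
    (cos_pos_of_mem_Ioo ⟨ha.trans_lt hψ.1, hψ.2.trans_le hb⟩) hC₁ h)

lemma log_le_barrierIntegral (ha0 : a ≤ 0) {m : ℝ} (hm : 0 < m) (hmb : m ≤ b) {C : ℝ}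
    (hC : 1 < C) : cos m * (log (√(C - 1) + m) - log √(C - 1)) ≤ barrierIntegral a b C := by
  set s := √(C - 1)
  have hs : 0 < s := sqrt_pos.2 (sub_pos.2 hC)
  calc cos m * (log (s + m) - log s) = ∫ ψ in (0 : ℝ)..m, cos m * (s + ψ)⁻¹ := by
        rw [integral_const_mul, integral_comp_add_left (fun x => x⁻¹), add_zero,
          integral_inv_of_pos hs (by positivity), log_div (by positivity) hs.ne']
    _ ≤ ∫ ψ in (0 : ℝ)..m, cos ψ / √(C - cos ψ) := by
        refine integral_mono_on hm.le ?_
          ((continuous_cos_div_sqrt_sub_cos hC).intervalIntegrable 0 m) fun ψ hψ => ?_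
        · refine (intervalIntegrable_inv (fun ψ hψ => ?_) (by fun_prop)).const_mul (cos m)
          rw [uIcc_of_le hm.le] at hψ
          exact (add_pos_of_pos_of_nonneg hs hψ.1).ne'
        · obtain ⟨hψ0, hψm⟩ := hψ
          have hcos : cos m ≤ cos ψ :=
            cos_le_cos_of_nonneg_of_le_pi hψ0 (by linarith [pi_pos]) hψm
          rw [← div_eq_mul_inv]
          refine div_le_div₀ ?_ hcos (sqrt_pos.2 (sub_cos_pos hC ψ)) ?_
          · exact cos_nonneg_of_neg_pi_div_two_le_of_le (by linarith [pi_pos]) (by linarith)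
          · simpa [abs_of_nonneg hψ0] using sqrt_sub_cos_le hC.le ψ
    _ ≤ barrierIntegral a b C := by
        refine integral_mono_interval ha0 hm.le hmb ?_
          ((continuous_cos_div_sqrt_sub_cos hC).intervalIntegrable a b)
        rw [EventuallyLE, MeasureTheory.ae_restrict_iff' measurableSet_Ioc]
        refine .of_forall fun ψ hψ => div_nonneg ?_ (sqrt_nonneg _)
        exact cos_nonneg_of_neg_pi_div_two_le_of_le (by linarith [hψ.1]) (by linarith [hψ.2])

lemma tendsto_barrierIntegral_nhdsGT_one (ha0 : a ≤ 0) (hb0 : 0 < b) :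
    Tendsto (barrierIntegral a b) (𝓝[>] 1) atTop := by
  have hcos : 0 < cos (b / 2) := cos_pos_of_mem_Ioo ⟨by linarith [pi_pos], by linarith⟩
  have hsqrt : Tendsto (fun C => √(C - 1)) (𝓝[>] 1) (𝓝 0) :=
    ((continuous_sqrt.comp (continuous_id.sub continuous_const)).tendsto' 1 0
      (by simp)).mono_left nhdsWithin_le_nhds
  have hsqrt_pos : Tendsto (fun C => √(C - 1)) (𝓝[>] 1) (𝓝[>] 0) :=
    tendsto_nhdsWithin_iff.2 ⟨hsqrt, eventually_nhdsWithin_of_forall fun C (hC : 1 < C) =>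
      sqrt_pos.2 (sub_pos.2 hC)⟩
  refine tendsto_atTop_mono' _ (eventually_nhdsWithin_of_forall fun C hC =>
    log_le_barrierIntegral ha hb ha0 (half_pos hb0) (half_le_self hb0.le) hC) ?_
  refine Tendsto.const_mul_atTop hcos ?_
  simp_rw [sub_eq_add_neg]
  exact ((hsqrt.add_const _).log (by positivity)).add_atTop
    (tendsto_neg_atBot_atTop.comp (tendsto_log_nhdsGT_zero.comp hsqrt_pos))

end

/-- The uniqueness assertion following (A5) in the Addenda: for fixed γ₂ ∈ [0, π/2), the map
`C ↦ ∫_{−π/2}^{π/2 − γ₂} cos ψ/√(C − cos ψ) dψ` is a strictly decreasing bijection from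
(1, ∞) onto (0, ∞); in particular for every B > 0 the relation
`2 = (1/√(2B)) ∫_{−π/2}^{π/2 − γ₂} cos ψ/√(C − cos ψ) dψ` determines C uniquely, so the
barrier 𝒯 is uniquely determined by B. -/
theorem barrierT_unique (γ₂ : ℝ) (hγ₂ : 0 ≤ γ₂) (hγ₂' : γ₂ < π / 2) :
    (∀ L : ℝ, 0 < L → ∃! C : ℝ, C ∈ Set.Ioi (1 : ℝ) ∧
        (∫ ψ in (-(π / 2))..(π / 2 - γ₂),
          Real.cos ψ / Real.sqrt (C - Real.cos ψ)) = L) ∧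
    StrictAntiOn
      (fun C => ∫ ψ in (-(π / 2))..(π / 2 - γ₂),
        Real.cos ψ / Real.sqrt (C - Real.cos ψ)) (Set.Ioi 1) ∧
    Set.BijOn
      (fun C => ∫ ψ in (-(π / 2))..(π / 2 - γ₂),
        Real.cos ψ / Real.sqrt (C - Real.cos ψ)) (Set.Ioi 1) (Set.Ioi 0) ∧
    ∀ B : ℝ, 0 < B → ∃! C : ℝ, C ∈ Set.Ioi (1 : ℝ) ∧
      2 = 1 / Real.sqrt (2 * B) *
        ∫ ψ in (-(π / 2))..(π / 2 - γ₂), Real.cos ψ / Real.sqrt (C - Real.cos ψ) := by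
  change (∀ L : ℝ, 0 < L → ∃! C, C ∈ Ioi 1 ∧ barrierIntegral _ _ C = L) ∧
    StrictAntiOn (barrierIntegral _ _) _ ∧ BijOn (barrierIntegral _ _) _ _ ∧
    ∀ B : ℝ, 0 < B → ∃! C, C ∈ Ioi 1 ∧ 2 = 1 / √(2 * B) * barrierIntegral _ _ C
  have ha : -(π / 2) ≤ -(π / 2) := le_rfl
  have hb : π / 2 - γ₂ ≤ π / 2 := by linarith
  have ha0 : -(π / 2) ≤ 0 := by linarith [pi_pos]
  have hb0 : 0 < π / 2 - γ₂ := by linarith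
  have hanti := strictAntiOn_barrierIntegral ha hb (ha0.trans_lt hb0)
  have hbij : BijOn (barrierIntegral (-(π / 2)) (π / 2 - γ₂)) (Ioi 1) (Ioi 0) :=
    ⟨fun _ hC => barrierIntegral_pos ha hb (ha0.trans_lt hb0) hC, hanti.injOn,
      surjOn_Ioi_of_tendsto_nhdsGT_of_tendsto_atTop (continuousOn_barrierIntegral _ _)
        (tendsto_barrierIntegral_nhdsGT_one ha hb ha0 hb0) (tendsto_barrierIntegral_atTop _ _)⟩
  refine ⟨fun L hL => hbij.existsUnique_mem_eq hL, hanti, hbij, fun B hB => ?_⟩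
  have hsqrt : 0 < √(2 * B) := sqrt_pos.2 (by positivity)
  refine (existsUnique_congr fun C => and_congr_right fun _ => ?_).1
    (hbij.existsUnique_mem_eq (mul_pos two_pos hsqrt))
  rw [one_div, inv_mul_eq_div, eq_div_iff hsqrt.ne', eq_comm]
end
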